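/- Let D > 0, Δt > 0, d > 0, and K(ξ, Δt) = (4πDΔt)^{−1/2} exp(−ξ²/(4DΔt)). Let Ω_P = (−∞,0) and Ω_B = (−d,∞), with overlap O = (−d,0). Let p : Ω_P → [0,∞) be integrable, let x₁, …, x_m ∈ Ω_B be fixed particle positions, and define μ = p·1_{Ω_P} dx + Σ_{i=1}^m δ_{x_i}, p̃(x) = ∫_{Ω_P} K(x − x', Δt) p(x') dx', and α = ∫_0^∞ p̃(x) dx, assuming 0 < α < 1. Perform one step of the PBD algorithm with overlap (B1)–(B5): let ξ be Bernoulli(α); on ξ = 1 create one particle at Y with density p₂(x) = p̃(x)/α on Ω_B ∖ Ω_P = (0,∞); set β = (N − m − 1)/(N − m − α) if ξ = 1 and β = (N − m)/(N − m − α) if ξ = 0, where ∫_{Ω_P} p = N − m and α < N − m; move each particle to Z_i = x_i + √(2DΔt) η_i with independent standard normals η_i; the updated continuum measure on Ω_P is q = β p̃·1_{Ω_P} dx + Σ_{i : Z_i ≤ −d} δ_{Z_i}, and the updated particle set in Ω_B is {Y if ξ = 1} ∪ {Z_i : Z_i > −d}. Then for every Borel set A ⊆ ℝ, E[q(A ∩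 Ω_P)] + E[#{updated particles in A}] = ∫_A ∫_ℝ K(x − x', Δt) dμ(x') dx. -/

import Mathlib

open MeasureTheory ProbabilityTheory Set
open scoped Classical

/-- The Gaussian heat kernel `K(ξ, τ) = (4πDτ)^{-1/2} exp(-ξ²/(4Dτ))`. -/
noncomputable def heatKernel (D ξ τ : ℝ) : ℝ :=
  (Real.sqrt (4 * Real.pi * D * τ))⁻¹ * Real.exp (-ξ ^ 2 / (4 * D * τ))

/-!
Expectation is linear, so the left side can be computed term by term. The continuum part
contributes `E[β] ∫_{A ∩ (−∞,0)} p̃`, and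
`E[β] = α (N−m−1)/(N−m−α) + (1−α)(N−m)/(N−m−α) = 1`. The created particle contributes
`P(ξ = 1, Y ∈ A) = ∫_{A ∩ (0,∞)} p̃`, which completes `∫_A p̃`. Each old particle moves to
`Z_i ∼ N(x_i, 2DΔt)` and is counted exactly once, in the continuum if `Z_i ≤ −d < 0` and as a
particle otherwise, so it contributes `P(Z_i ∈ A) = ∫_A K(x − x_i, Δt) dx`.
-/

open scoped NNReal

section HeatKernel

variable {D τ : ℝ}

lemma heatKernel_nonneg (D ξ τ : ℝ) : 0 ≤ heatKernel D ξ τ :=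
  mul_nonneg (inv_nonneg.2 (Real.sqrt_nonneg _)) (Real.exp_pos _).le

lemma heatKernel_le (hD : 0 ≤ D) (hτ : 0 ≤ τ) (ξ : ℝ) :
    heatKernel D ξ τ ≤ (Real.sqrt (4 * Real.pi * D * τ))⁻¹ :=
  mul_le_of_le_one_right (inv_nonneg.2 (Real.sqrt_nonneg _)) <| Real.exp_le_one_iff.2 <|
    div_nonpos_of_nonpos_of_nonneg (neg_nonpos.2 (sq_nonneg _)) (by positivity)

lemma continuous_heatKernel (D τ : ℝ) : Continuous fun ξ => heatKernel D ξ τ := by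
  unfold heatKernel
  fun_prop

lemma heatKernel_sub_eq_gaussianPDFReal {v : ℝ≥0} (hv : (v : ℝ) = 2 * D * τ) (x y : ℝ) :
    heatKernel D (x - y) τ = gaussianPDFReal y v x := by
  rw [heatKernel, gaussianPDFReal, hv]
  ring_nf

lemma integrable_heatKernel (hD : 0 ≤ D) (hτ : 0 ≤ τ) : Integrable fun ξ => heatKernel D ξ τ := by
  refine (integrable_gaussianPDFReal 0 ⟨2 * D * τ, by positivity⟩).congr (ae_of_all _ fun ξ => ?_)
  simpa using (heatKernel_sub_eq_gaussianPDFReal (v := ⟨2 * D * τ, by positivity⟩) rfl ξ 0).symm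

lemma integrable_setIntegral_heatKernel_mul (hD : 0 ≤ D) (hτ : 0 ≤ τ) {s : Set ℝ}
    (hs : MeasurableSet s) {p : ℝ → ℝ} (hp : IntegrableOn p s) :
    Integrable fun x => ∫ y in s, heatKernel D (x - y) τ * p y := by
  refine (((integrable_indicator_iff hs).2 hp).integrable_convolution
    (ContinuousLinearMap.mul ℝ ℝ) (integrable_heatKernel hD hτ)).congr (ae_of_all _ fun x => ?_)
  beta_reduce
  rw [convolution_def, ← integral_indicator hs]
  congr 1 with y
  by_cases hy : y ∈ s <;> simp [hy, mul_comm]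

lemma setIntegral_heatKernel_mul_nonneg {s : Set ℝ} (hs : MeasurableSet s) {p : ℝ → ℝ}
    (hp : ∀ y ∈ s, 0 ≤ p y) (x : ℝ) : 0 ≤ ∫ y in s, heatKernel D (x - y) τ * p y :=
  setIntegral_nonneg hs fun y hy => mul_nonneg (heatKernel_nonneg _ _ _) (hp y hy)

end HeatKernel

lemma gaussianReal_real_apply (μ : ℝ) {v : ℝ≥0} (hv : v ≠ 0) (s : Set ℝ) :
    (gaussianReal μ v).real s = ∫ x in s, gaussianPDFReal μ v x := by
  rw [measureReal_def, gaussianReal_apply_eq_integral μ hv,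
    ENNReal.toReal_ofReal (integral_nonneg (gaussianPDFReal_nonneg μ v))]

lemma integral_withDensity_ofReal_indicator {α : Type*} [MeasurableSpace α] {μ : Measure α}
    {s : Set α} (hs : MeasurableSet s) {p : α → ℝ} (hp0 : ∀ y ∈ s, 0 ≤ p y)
    (hpm : AEMeasurable p (μ.restrict s)) (f : α → ℝ) :
    ∫ y, f y ∂μ.withDensity (fun y => ENNReal.ofReal (s.indicator p y))
      = ∫ y in s, f y * p y ∂μ := by
  have hdens : AEMeasurable (fun y => ENNReal.ofReal (s.indicator p y)) μ :=
    ENNReal.measurable_ofReal.comp_aemeasurable ((aemeasurable_indicator_iff hs).2 hpm)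
  rw [integral_withDensity_eq_integral_toReal_smul₀ hdens
      (ae_of_all _ fun _ => ENNReal.ofReal_lt_top),
    ← integral_indicator hs]
  congr 1 with y
  by_cases hy : y ∈ s
  · simp [hy, ENNReal.toReal_ofReal (hp0 y hy), mul_comm]
  · simp [hy]

lemma integral_heatKernel_withDensity_add_sum_dirac {D τ : ℝ} (hD : 0 ≤ D) (hτ : 0 ≤ τ)
    {s : Set ℝ} (hs : MeasurableSet s) {p : ℝ → ℝ} (hp0 : ∀ y ∈ s, 0 ≤ p y)
    (hp : IntegrableOn p s) {ι : Type*} [Fintype ι] (xs : ι → ℝ) (x : ℝ) :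
    ∫ y, heatKernel D (x - y) τ ∂(volume.withDensity (fun y => ENNReal.ofReal (s.indicator p y)) +
        ∑ i, Measure.dirac (xs i))
      = (∫ y in s, heatKernel D (x - y) τ * p y) + ∑ i, heatKernel D (x - xs i) τ := by
  have := isFiniteMeasure_withDensity_ofReal ((integrable_indicator_iff hs).2 hp).2
  have hK (μ : Measure ℝ) [IsFiniteMeasure μ] : Integrable (fun y => heatKernel D (x - y) τ) μ :=
    .of_bound ((continuous_heatKernel D τ).comp (continuous_sub_left x)).aestronglyMeasurable _
      (ae_of_all _ fun y => (Real.norm_of_nonneg (heatKernel_nonneg _ _ _)).trans_le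
        (heatKernel_le hD hτ _))
  rw [integral_add_measure (hK _) (hK _), integral_finsetSum_measure fun i _ => hK _,
    integral_withDensity_ofReal_indicator hs hp0 hp.aemeasurable]
  simp_rw [integral_dirac]

lemma setIntegral_heatKernel_withDensity_add_sum_dirac {D τ : ℝ} (hD : 0 < D) (hτ : 0 < τ)
    {v : ℝ≥0} (hv : (v : ℝ) = 2 * D * τ) {s : Set ℝ} (hs : MeasurableSet s) {p : ℝ → ℝ}
    (hp0 : ∀ y ∈ s, 0 ≤ p y) (hp : IntegrableOn p s) {ι : Type*} [Fintype ι] (xs : ι → ℝ)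
    (A : Set ℝ) :
    ∫ x in A, ∫ y, heatKernel D (x - y) τ
        ∂(volume.withDensity (fun y => ENNReal.ofReal (s.indicator p y)) +
          ∑ i, Measure.dirac (xs i))
      = (∫ x in A, ∫ y in s, heatKernel D (x - y) τ * p y) +
          ∑ i, (gaussianReal (xs i) v).real A := by
  have hv0 : v ≠ 0 := by
    rw [← NNReal.coe_ne_zero, hv]
    positivity
  have hK (y : ℝ) : Integrable fun x => heatKernel D (x - y) τ :=
    (integrable_heatKernel hD.le hτ.le).comp_sub_right y
  simp_rw [integral_heatKernel_withDensity_add_sum_dirac hD.le hτ.le hs hp0 hp xs]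
  rw [integral_add (integrable_setIntegral_heatKernel_mul hD.le hτ.le hs hp).integrableOn
      (integrable_finsetSum _ fun i _ => hK (xs i)).integrableOn,
    integral_finsetSum _ fun i _ => (hK (xs i)).integrableOn]
  congr 1
  refine Finset.sum_congr rfl fun i _ => ?_
  simp_rw [heatKernel_sub_eq_gaussianPDFReal hv, gaussianReal_real_apply _ hv0]

lemma setIntegral_inter_Iio_add_inter_Ioi {μ : Measure ℝ} [NullSingletonClass μ] {f : ℝ → ℝ}
    {A : Set ℝ} (hf : IntegrableOn f A μ) (b : ℝ) :
    ∫ x in A ∩ Iio b, f x ∂μ + ∫ x in A ∩ Ioi b, f x ∂μ = ∫ x in A, f x ∂μ := by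
  rw [setIntegral_congr_set ((ae_eq_refl A).inter Iio_ae_eq_Iic), ← compl_Iic, ← sdiff_eq,
    integral_inter_add_sdiff measurableSet_Iic hf]

section Expectation

variable {Ω : Type*} [MeasurableSpace Ω] {P : Measure Ω}

lemma gaussianReal_const_add_sqrt_mul {η : Ω → ℝ} (hη : HasLaw η (gaussianReal 0 1) P) (a : ℝ)
    (v : ℝ≥0) : HasLaw (fun ω => a + Real.sqrt v * η ω) (gaussianReal a v) P := by
  convert gaussianReal_const_add (gaussianReal_const_mul hη (Real.sqrt v)) a using 2
  · simp
  · ext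
    simp

lemma ProbabilityTheory.HasLaw.measureReal_mem_le_add_measureReal_mem_lt {Z : Ω → ℝ}
    {ν : Measure ℝ} [IsFiniteMeasure ν] (hZ : HasLaw Z ν P) {A : Set ℝ} (hA : MeasurableSet A)
    {r b : ℝ} (hrb : r < b) :
    P.real {ω | Z ω ∈ A ∩ Iio b ∧ Z ω ≤ r} + P.real {ω | Z ω ∈ A ∧ r < Z ω} = ν.real A := by
  have hle : {x | x ∈ A ∩ Iio b ∧ x ≤ r} = A ∩ Iic r := by
    ext x
    simp only [mem_ofPred_eq, mem_inter_iff, mem_Iio, mem_Iic]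
    exact ⟨fun h => ⟨h.1.1, h.2⟩, fun h => ⟨⟨h.1, h.2.trans_lt hrb⟩, h.2⟩⟩
  have hlt : {x | x ∈ A ∧ r < x} = A \ Iic r := by
    ext x
    simp
  rw [hZ.measureReal_eq (p := fun x => x ∈ A ∩ Iio b ∧ x ≤ r) (hle ▸ hA.inter measurableSet_Iic),
    hZ.measureReal_eq (p := fun x => x ∈ A ∧ r < x) (hlt ▸ hA.diff measurableSet_Iic), hle, hlt,
    measureReal_inter_add_sdiff measurableSet_Iic]

lemma integrable_ite_const [IsFiniteMeasure P] {p : Ω → Prop} [DecidablePred p]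
    (hp : MeasurableSet {ω | p ω}) (u w : ℝ) : Integrable (fun ω => if p ω then u else w) P :=
  .of_bound (Measurable.ite hp measurable_const measurable_const).aestronglyMeasurable
    (max |u| |w|) (ae_of_all _ fun ω => by split_ifs <;> simp)

lemma integral_ite_const [IsProbabilityMeasure P] {p : Ω → Prop} [DecidablePred p]
    (hp : MeasurableSet {ω | p ω}) (u w : ℝ) :
    ∫ ω, (if p ω then u else w) ∂P = P.real {ω | p ω} * u + (1 - P.real {ω | p ω}) * w := by
  have hsplit : (fun ω => if p ω then u else w)
      = fun ω => {ω | p ω}.indicator (fun _ => u - w) ω + w := by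
    ext ω
    by_cases h : p ω <;> simp [h]
  rw [hsplit, integral_add ((integrable_const _).indicator hp) (integrable_const w),
    integral_indicator_const _ hp, integral_const, probReal_univ, smul_eq_mul, smul_eq_mul]
  ring

lemma integral_ite_div_sub_eq_one [IsProbabilityMeasure P] {p : Ω → Prop} [DecidablePred p]
    (hp : MeasurableSet {ω | p ω}) {n α : ℝ} (hα : P.real {ω | p ω} = α) (hn : n - α ≠ 0) :
    ∫ ω, (if p ω then (n - 1) / (n - α) else n / (n - α)) ∂P = 1 := by
  rw [integral_ite_const hp, hα]
  field_simp
  ring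

lemma integral_ite_one_zero [IsFiniteMeasure P] {p : Ω → Prop} [DecidablePred p]
    (hp : MeasurableSet {ω | p ω}) : ∫ ω, (if p ω then (1 : ℝ) else 0) ∂P = P.real {ω | p ω} := by
  rw [← integral_indicator_one hp]
  simp [Set.indicator_apply]

lemma integral_add_sum_ite_one [IsFiniteMeasure P] {ι : Type*} (s : Finset ι) {f : Ω → ℝ}
    (hf : Integrable f P) {p : ι → Ω → Prop} [∀ i, DecidablePred (p i)]
    (hp : ∀ i, MeasurableSet {ω | p i ω}) :
    ∫ ω, (f ω + ∑ i ∈ s, if p i ω then (1 : ℝ) else 0) ∂P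
      = ∫ ω, f ω ∂P + ∑ i ∈ s, P.real {ω | p i ω} := by
  rw [integral_add hf (integrable_finsetSum _ fun i _ => integrable_ite_const (hp i) 1 0),
    integral_finsetSum _ fun i _ => integrable_ite_const (hp i) 1 0]
  simp only [integral_ite_one_zero (hp _)]

end Expectation

theorem pbd_overlap_algorithm_mean_consistency_general
    {Ω : Type*} [MeasurableSpace Ω] (P : Measure Ω) [IsProbabilityMeasure P]
    (D Δt d : ℝ) (hD : 0 < D) (hΔt : 0 < Δt) (hd : 0 < d) (N : ℕ)
    -- the continuum density on `Ω_P = (−∞, 0)` with total mass `N − m`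
    (p : ℝ → ℝ) (hp0 : ∀ x ∈ Iio (0 : ℝ), 0 ≤ p x) (hpint : IntegrableOn p (Iio 0))
    (m : ℕ)
    -- the particle positions in `Ω_B = (−d, ∞)`
    (xs : Fin m → ℝ)
    -- the diffused continuum density `p̃` and the crossing mass `α`
    (ptilde : ℝ → ℝ)
    (hptilde : ∀ x, ptilde x = ∫ y in Iio (0 : ℝ), heatKernel D (x - y) Δt * p y)
    (α : ℝ) (hα : α = ∫ x in Ioi (0 : ℝ), ptilde x)
    (hαN : α < (N : ℝ) - (m : ℝ))
    -- the Bernoulli(α) creation event `ξ` and creation position `Y` with density `p̃/α` on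
    -- `Ω_B ∖ Ω_P = (0,∞)`, encoded jointly: `P(ξ = 1 ∧ Y ∈ B) = ∫_{B ∩ (0,∞)} p̃`
    (ξ : Ω → Bool) (Y : Ω → ℝ) (hξmeas : Measurable ξ) (hYmeas : Measurable Y)
    (hjoint : ∀ B : Set ℝ, MeasurableSet B →
      P {ω | ξ ω = true ∧ Y ω ∈ B} = ENNReal.ofReal (∫ x in B ∩ Ioi (0 : ℝ), ptilde x))
    -- the independent standard-normal displacements of the existing particles
    (η : Fin m → Ω → ℝ)
    (hηmeas : ∀ i, Measurable (η i))
    (hηlaw : ∀ i, Measure.map (η i) P = gaussianReal 0 1) :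
    -- conclusion: for every Borel `A ⊆ ℝ`, the expected updated continuum mass on `A ∩ Ω_P`
    -- plus the expected number of updated particles in `A` equals the heat-kernel evolution
    -- of the combined initial state `μ = p 1_{Ω_P} dx + Σ_i δ_{x_i}`
    ∀ A : Set ℝ, MeasurableSet A →
      (∫ ω, ((if ξ ω = true then ((N : ℝ) - (m : ℝ) - 1) / ((N : ℝ) - (m : ℝ) - α)
              else ((N : ℝ) - (m : ℝ)) / ((N : ℝ) - (m : ℝ) - α)) *
               (∫ x in A ∩ Iio (0 : ℝ), ptilde x) +
             ∑ i, if xs i + Real.sqrt (2 * D * Δt) * η i ω ∈ A ∩ Iio (0 : ℝ) ∧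
                    xs i + Real.sqrt (2 * D * Δt) * η i ω ≤ -d then (1 : ℝ) else 0) ∂P) +
      (∫ ω, ((if ξ ω = true ∧ Y ω ∈ A then (1 : ℝ) else 0) +
             ∑ i, if xs i + Real.sqrt (2 * D * Δt) * η i ω ∈ A ∧
                    -d < xs i + Real.sqrt (2 * D * Δt) * η i ω then (1 : ℝ) else 0) ∂P)
      = ∫ x in A, ∫ y, heatKernel D (x - y) Δt
          ∂(volume.withDensity (fun y => ENNReal.ofReal ((Iio (0 : ℝ)).indicator p y)) +
            ∑ i : Fin m, Measure.dirac (xs i)) := by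
  intro A hA
  set v : ℝ≥0 := ⟨2 * D * Δt, by positivity⟩
  have hZ (i : Fin m) : HasLaw (fun ω => xs i + Real.sqrt (2 * D * Δt) * η i ω)
      (gaussianReal (xs i) v) P :=
    gaussianReal_const_add_sqrt_mul ⟨(hηmeas i).aemeasurable, hηlaw i⟩ (xs i) v
  have hZmeas (i : Fin m) : Measurable fun ω => xs i + Real.sqrt (2 * D * Δt) * η i ω := by
    fun_prop
  have hcreate (B : Set ℝ) (hB : MeasurableSet B) :
      P.real {ω | ξ ω = true ∧ Y ω ∈ B} = ∫ x in B ∩ Ioi 0, ptilde x := by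
    rw [measureReal_def, hjoint B hB, ENNReal.toReal_ofReal (setIntegral_nonneg
      (hB.inter measurableSet_Ioi) fun x _ => hptilde x ▸
        setIntegral_heatKernel_mul_nonneg measurableSet_Iio hp0 x)]
  have hξ : P.real {ω | ξ ω = true} = α := by
    simpa [hα] using hcreate univ .univ
  have hptilde_int : Integrable ptilde := by
    rw [funext hptilde]
    exact integrable_setIntegral_heatKernel_mul hD.le hΔt.le measurableSet_Iio hpint
  have hξset : MeasurableSet {ω | ξ ω = true} := hξmeas (measurableSet_singleton true)
  have hcreated : MeasurableSet {ω | ξ ω = true ∧ Y ω ∈ A} := hξset.inter (hYmeas hA)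
  rw [integral_add_sum_ite_one _ ((integrable_ite_const hξset _ _).mul_const _) ?absorbed,
    integral_add_sum_ite_one _ (integrable_ite_const hcreated _ _) ?kept,
    integral_mul_const, integral_ite_div_sub_eq_one hξset hξ (sub_ne_zero.2 hαN.ne'), one_mul,
    integral_ite_one_zero hcreated, hcreate A hA,
    setIntegral_heatKernel_withDensity_add_sum_dirac hD hΔt (v := v) rfl measurableSet_Iio hp0
      hpint xs A]
  simp_rw [← hptilde]
  rw [← setIntegral_inter_Iio_add_inter_Ioi (A := A) hptilde_int.integrableOn 0,
    ← Finset.sum_congr rfl fun i _ =>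
      (hZ i).measureReal_mem_le_add_measureReal_mem_lt hA (neg_lt_zero.2 hd),
    Finset.sum_add_distrib]
  ring
  case absorbed => exact fun i => hZmeas i ((hA.inter measurableSet_Iio).inter measurableSet_Iic)
  case kept => exact fun i => hZmeas i (hA.inter measurableSet_Ioi)

/-- One-step mean-consistency of the second PBD algorithm (B1)–(B5), with
overlap region: `Ω_P = (−∞,0)`, `Ω_B = (−d,∞)`, `O = (−d,0)`. Starting from the combined
state `μ = p 1_{Ω_P} dx + Σ_i δ_{x_i}`, one step creates a particle at `Y ∼ p̃/α` on
`Ω_B ∖ Ω_P = (0,∞)` with probability `α = ∫_0^∞ p̃`, rescales the diffused continuum density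
by `β`, moves each particle to `Z i = x i + √(2DΔt) η i`, absorbs into the continuum the
particles with `Z i ≤ −d`, and keeps the particles with `Z i > −d`. Then for every Borel
set `A ⊆ ℝ`, `E[q(A ∩ Ω_P)] + E[#{updated particles in A}] = ∫_A ∫_ℝ K(x − x′, Δt) dμ(x′) dx`. -/
theorem pbd_overlap_algorithm_mean_consistency
    {Ω : Type*} [MeasurableSpace Ω] (P : Measure Ω) [IsProbabilityMeasure P]
    (D Δt d : ℝ) (hD : 0 < D) (hΔt : 0 < Δt) (hd : 0 < d) (N : ℕ)
    -- the continuum density on `Ω_P = (−∞, 0)` with total mass `N − m`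
    (p : ℝ → ℝ) (hp0 : ∀ x ∈ Iio (0 : ℝ), 0 ≤ p x) (hpint : IntegrableOn p (Iio 0))
    (m : ℕ) (hmass : ∫ x in Iio (0 : ℝ), p x = (N : ℝ) - (m : ℝ))
    -- the particle positions in `Ω_B = (−d, ∞)`
    (xs : Fin m → ℝ) (hxs : ∀ i, xs i ∈ Ioi (-d))
    -- the diffused continuum density `p̃` and the crossing mass `α`
    (ptilde : ℝ → ℝ)
    (hptilde : ∀ x, ptilde x = ∫ y in Iio (0 : ℝ), heatKernel D (x - y) Δt * p y)
    (α : ℝ) (hα : α = ∫ x in Ioi (0 : ℝ), ptilde x)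
    (hα0 : 0 < α) (hα1 : α < 1) (hαN : α < (N : ℝ) - (m : ℝ))
    -- the Bernoulli(α) creation event `ξ` and creation position `Y` with density `p̃/α` on
    -- `Ω_B ∖ Ω_P = (0,∞)`, encoded jointly: `P(ξ = 1 ∧ Y ∈ B) = ∫_{B ∩ (0,∞)} p̃`
    (ξ : Ω → Bool) (Y : Ω → ℝ) (hξmeas : Measurable ξ) (hYmeas : Measurable Y)
    (hjoint : ∀ B : Set ℝ, MeasurableSet B →
      P {ω | ξ ω = true ∧ Y ω ∈ B} = ENNReal.ofReal (∫ x in B ∩ Ioi (0 : ℝ), ptilde x))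
    -- the independent standard-normal displacements of the existing particles
    (η : Fin m → Ω → ℝ)
    (hηmeas : ∀ i, Measurable (η i))
    (hηlaw : ∀ i, Measure.map (η i) P = gaussianReal 0 1)
    (hηindep : iIndepFun η P)
    (hindep : IndepFun (fun ω => (ξ ω, Y ω)) (fun ω i => η i ω) P) :
    -- conclusion: for every Borel `A ⊆ ℝ`, the expected updated continuum mass on `A ∩ Ω_P`
    -- plus the expected number of updated particles in `A` equals the heat-kernel evolution
    -- of the combined initial state `μ = p 1_{Ω_P} dx + Σ_i δ_{x_i}`
    ∀ A : Set ℝ, MeasurableSet A →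
      (∫ ω, ((if ξ ω = true then ((N : ℝ) - (m : ℝ) - 1) / ((N : ℝ) - (m : ℝ) - α)
              else ((N : ℝ) - (m : ℝ)) / ((N : ℝ) - (m : ℝ) - α)) *
               (∫ x in A ∩ Iio (0 : ℝ), ptilde x) +
             ∑ i, if xs i + Real.sqrt (2 * D * Δt) * η i ω ∈ A ∩ Iio (0 : ℝ) ∧
                    xs i + Real.sqrt (2 * D * Δt) * η i ω ≤ -d then (1 : ℝ) else 0) ∂P) +
      (∫ ω, ((if ξ ω = true ∧ Y ω ∈ A then (1 : ℝ) else 0) +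
             ∑ i, if xs i + Real.sqrt (2 * D * Δt) * η i ω ∈ A ∧
                    -d < xs i + Real.sqrt (2 * D * Δt) * η i ω then (1 : ℝ) else 0) ∂P)
      = ∫ x in A, ∫ y, heatKernel D (x - y) Δt
          ∂(volume.withDensity (fun y => ENNReal.ofReal ((Iio (0 : ℝ)).indicator p y)) +
            ∑ i : Fin m, Measure.dirac (xs i)) :=
  pbd_overlap_algorithm_mean_consistency_general P D Δt d hD hΔt hd N p hp0 hpint m xs ptilde
    hptilde α hα hαN ξ Y hξmeas hYmeas hjoint η hηmeas hηlaw
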